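/- Assume a_1 ≤ a_2 ≤ … ≤ a_m ≤ 0 < a_{m+1} ≤ … ≤ a_{n−1} for some 0 ≤ m < n−1. Let λ be a composition of d with λ_i = 0 for all m+1 ≤ i ≤ n−1 and λ_n < d, let j be an index with m+1 ≤ j ≤ n−1, let k ∈ {1,…,n−1}, and set η = λ + λ_n e_k − λ_n e_n (a composition of d with λ ≤ η). Then the element y^{d a_j}·m_{λ,η} = (x_k y^{−a_k})^{λ_n}·y^{−a·λ° − λ_n + d a_j} of K does not belong to A. -/

import Mathlib

/-!
Give `x_i` the weight `a_i` and `y` the weight `1`. The generators `x_i y^{-a_i}` and `y^{-1}`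
of `A` have weight `0` and `-1`, so every element of `A` is a fraction `f / y^N` with `f` a
polynomial of weighted degree at most `N`; consequently a Laurent monomial lies in `A` only if
its weight is `≤ 0`. The element in question is the monomial
`x_k^{λ_n} y^{d a_j - a·λ° - a_k λ_n - λ_n}` of weight `d a_j - a·λ° - λ_n ≥ d - λ_n > 0`,
because `a_j ≥ 1` and `a·λ° ≤ 0` (`λ` vanishes wherever `a_i > 0`).
-/

open MvPolynomial Finset

noncomputable section

/-- `Kk p` is the fraction field of `ℂ[x_1,…,x_p, y]`, a polynomial ring in `p+1` variables
(so the paper's `n` is `p+1`). -/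
abbrev Kk (p : ℕ) := FractionRing (MvPolynomial (Fin (p+1)) ℂ)

variable {p : ℕ}

/-- the images `x_i` (for `i = 1, …, p`) in the fraction field -/
def xv (i : Fin p) : Kk p :=
  algebraMap (MvPolynomial (Fin (p+1)) ℂ) (Kk p) (X i.castSucc)

/-- the image of `y` in the fraction field -/
def yv : Kk p :=
  algebraMap (MvPolynomial (Fin (p+1)) ℂ) (Kk p) (X (Fin.last p))

/-- `a · λ° = ∑_{i=1}^{n-1} a_i λ_i` -/
def aDot (a : Fin p → ℤ) (lam : Fin (p+1) → ℕ) : ℤ :=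
  ∑ i : Fin p, a i * lam i.castSucc

/-- the monomial `m_{μ,λ} = (∏_{i<n} x_i^{λ_i - μ_i}) y^{-a·λ° - λ_n - μ_n}` -/
def mMono (a : Fin p → ℤ) (μ lam : Fin (p+1) → ℕ) : Kk p :=
  (∏ i : Fin p, xv i ^ (lam i.castSucc - μ i.castSucc)) *
    yv ^ (-(aDot a lam) - (lam (Fin.last p) : ℤ) - (μ (Fin.last p) : ℤ))

/-- the coordinate ring `A = ℂ[x_1 y^{-a_1}, …, x_{n-1} y^{-a_{n-1}}, y^{-1}]`, i.e. the
ℂ-subalgebra of `K` generated by the `x_i y^{-a_i}` and `y^{-1}`. -/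
def Asub (a : Fin p → ℤ) : Subalgebra ℂ (Kk p) :=
  Algebra.adjoin ℂ ((Set.range fun i : Fin p => xv i * yv ^ (-(a i) : ℤ)) ∪ {yv⁻¹})

namespace MvPolynomial

open Finsupp

variable {σ k : Type*} [CommRing k]

local notation "𝕂" => FractionRing (MvPolynomial σ k)
local notation "ι" => algebraMap (MvPolynomial σ k) 𝕂

variable (k) in
def weightedDegreeLE (w : σ → ℤ) (N : ℤ) :
    Submodule k (MvPolynomial σ k) :=
  restrictSupport k {s | weight w s ≤ N}

variable {w : σ → ℤ}

lemma monomial_mem_weightedDegreeLE {s : σ →₀ ℕ} {N : ℤ} (hs : weight w s ≤ N) (c : k) :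
    monomial s c ∈ weightedDegreeLE k w N :=
  (monomial_mem_restrictSupport k).2 (.inl hs)

open scoped Pointwise in
lemma weightedDegreeLE_mul_le (M N : ℤ) :
    weightedDegreeLE k w M * weightedDegreeLE k w N ≤ weightedDegreeLE k w (M + N) := by
  rw [weightedDegreeLE, weightedDegreeLE, ← restrictSupport_add]
  apply restrictSupport_mono
  rintro _ ⟨s, hs, u, hu, rfl⟩
  simp only [Set.mem_ofPred_eq, map_add] at hs hu ⊢
  omega

lemma mul_mem_weightedDegreeLE {M N : ℤ} {f g : MvPolynomial σ k}
    (hf : f ∈ weightedDegreeLE k w M) (hg : g ∈ weightedDegreeLE k w N) :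
    f * g ∈ weightedDegreeLE k w (M + N) :=
  weightedDegreeLE_mul_le M N (Submodule.mul_mem_mul hf hg)

lemma X_pow_mul_mem_weightedDegreeLE (t : σ) (M : ℕ) {N : ℕ} {f : MvPolynomial σ k}
    (hf : f ∈ weightedDegreeLE k w (N * w t)) :
    X t ^ M * f ∈ weightedDegreeLE k w ((M + N : ℕ) * w t) := by
  have hX : X t ^ M ∈ weightedDegreeLE k w (M * w t) := by
    rw [X_pow_eq_monomial]
    exact monomial_mem_weightedDegreeLE (by simp [weight_single]) _
  simpa [add_mul] using mul_mem_weightedDegreeLE hX hf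

variable (k w) (t : σ)

def nonposWeightSubalgebra : Subalgebra k 𝕂 where
  carrier := {z | ∃ N : ℕ, ∃ f ∈ weightedDegreeLE k w (N * w t), ι f = ι (X t) ^ N * z}
  mul_mem' := by
    rintro z₁ z₂ ⟨N₁, f₁, hf₁, h₁⟩ ⟨N₂, f₂, hf₂, h₂⟩
    refine ⟨N₁ + N₂, f₁ * f₂, ?_, ?_⟩
    · simpa [add_mul] using mul_mem_weightedDegreeLE hf₁ hf₂
    · rw [map_mul, h₁, h₂]; ring
  add_mem' := by
    rintro z₁ z₂ ⟨N₁, f₁, hf₁, h₁⟩ ⟨N₂, f₂, hf₂, h₂⟩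
    refine ⟨N₂ + N₁, X t ^ N₂ * f₁ + X t ^ N₁ * f₂,
      add_mem (X_pow_mul_mem_weightedDegreeLE t N₂ hf₁) ?_, ?_⟩
    · rw [add_comm N₂]; exact X_pow_mul_mem_weightedDegreeLE t N₁ hf₂
    · simp only [map_add, map_mul, map_pow, h₁, h₂]; ring
  algebraMap_mem' c :=
    ⟨0, C c, monomial_mem_weightedDegreeLE (by simp) c, by
      simp [IsScalarTower.algebraMap_apply k (MvPolynomial σ k) 𝕂]⟩

variable {k w t}

lemma weight_add_single (s : σ →₀ ℕ) (n : ℕ) :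
    weight w (s + single t n) = weight w s + n * w t := by
  simp [weight_single]

lemma exists_ge_of_mem_nonposWeightSubalgebra {z : 𝕂} (hz : z ∈ nonposWeightSubalgebra k w t)
    (N₀ : ℕ) : ∃ N ≥ N₀, ∃ f ∈ weightedDegreeLE k w (N * w t),
      ι f = ι (X t) ^ N * z := by
  obtain ⟨N, f, hf, h⟩ := hz
  refine ⟨N₀ + N, by omega, X t ^ N₀ * f, X_pow_mul_mem_weightedDegreeLE t N₀ hf, ?_⟩
  rw [map_mul, map_pow, h, pow_add, mul_assoc]

variable [IsDomain k]

lemma algebraMap_X_pow_mul_monomial_mul_zpow (s : σ →₀ ℕ) {e : ℤ} {N n : ℕ}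
    (h : (n : ℤ) = N + e) :
    ι (X t) ^ N * (ι (monomial s 1) * ι (X t) ^ e) =
      ι (monomial (s + single t n) 1) := by
  have hy : ι (X t : MvPolynomial σ k) ≠ 0 :=
    (map_ne_zero_iff _ (IsFractionRing.injective _ _)).2 (X_ne_zero t)
  have hm : monomial (s + single t n) (1 : k) = monomial s 1 * X t ^ n := by
    rw [X_pow_eq_monomial, monomial_mul, one_mul]
  rw [hm, map_mul, map_pow, ← zpow_natCast _ n, h, zpow_add₀ hy, zpow_natCast]
  ring

lemma algebraMap_monomial_mul_zpow_mem_iff (s : σ →₀ ℕ) (e : ℤ) :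
    ι (monomial s 1) * ι (X t) ^ e ∈ nonposWeightSubalgebra k w t ↔
      weight w s + e * w t ≤ 0 := by
  constructor
  · intro hz
    obtain ⟨N, hN, f, hf, h⟩ := exists_ge_of_mem_nonposWeightSubalgebra hz (-e).toNat
    obtain ⟨n, hn⟩ : ∃ n : ℕ, (n : ℤ) = N + e := ⟨(N + e).toNat, by omega⟩
    rw [algebraMap_X_pow_mul_monomial_mul_zpow s hn] at h
    rw [IsFractionRing.injective _ _ h, weightedDegreeLE, monomial_mem_restrictSupport,
      Set.mem_ofPred_eq, weight_add_single] at hf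
    have : (n : ℤ) * w t = N * w t + e * w t := by rw [hn]; ring
    rcases hf with hf | hf
    · linarith
    · exact absurd hf one_ne_zero
  · intro hs
    obtain ⟨n, hn⟩ : ∃ n : ℕ, (n : ℤ) = ((-e).toNat : ℕ) + e :=
      ⟨((-e).toNat + e).toNat, by omega⟩
    refine ⟨(-e).toNat, monomial (s + single t n) 1, monomial_mem_weightedDegreeLE ?_ _,
      (algebraMap_X_pow_mul_monomial_mul_zpow s hn).symm⟩
    have : (n : ℤ) * w t = ((-e).toNat : ℕ) * w t + e * w t := by rw [hn]; ring
    rw [weight_add_single]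
    linarith

end MvPolynomial

open Finsupp

lemma yv_ne_zero : (yv : Kk p) ≠ 0 :=
  (map_ne_zero_iff _ (IsFractionRing.injective _ _)).2 (X_ne_zero _)

lemma Asub_le_nonposWeightSubalgebra (a : Fin p → ℤ) :
    Asub a ≤ nonposWeightSubalgebra ℂ (Fin.snoc a 1) (Fin.last p) := by
  refine Algebra.adjoin_le ?_
  rintro _ (⟨i, rfl⟩ | rfl)
  · exact (algebraMap_monomial_mul_zpow_mem_iff (single i.castSucc 1) (-(a i))).2
      (by simp [weight_single])
  · simpa [yv] using (algebraMap_monomial_mul_zpow_mem_iff (k := ℂ)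
      (w := (Fin.snoc a 1 : Fin (p + 1) → ℤ)) (t := Fin.last p) 0 (-1)).2 (by simp)

lemma aDot_nonpos {a : Fin p → ℤ} {lam : Fin (p + 1) → ℕ}
    (h : ∀ i, lam i.castSucc ≠ 0 → a i ≤ 0) : aDot a lam ≤ 0 := by
  refine Finset.sum_nonpos fun i _ => ?_
  by_cases hi : lam i.castSucc = 0
  · simp [hi]
  · exact mul_nonpos_of_nonpos_of_nonneg (h i hi) (by positivity)

section Shift

variable {a : Fin p → ℤ} {lam η : Fin (p + 1) → ℕ} {k : Fin p} {L : ℕ}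

lemma aDot_of_castSucc_eq
    (hη : ∀ i : Fin p, η i.castSucc = lam i.castSucc + if i = k then L else 0) :
    aDot a η = aDot a lam + a k * L := by
  simp only [aDot, hη, Nat.cast_add, mul_add, Finset.sum_add_distrib, Nat.cast_ite, Nat.cast_zero,
    mul_ite, mul_zero, Finset.sum_ite_eq', Finset.mem_univ, if_true]

lemma mMono_of_castSucc_eq
    (hη : ∀ i : Fin p, η i.castSucc = lam i.castSucc + if i = k then L else 0) :
    mMono a lam η =
      xv k ^ L * yv ^ (-(aDot a lam) - a k * L - η (Fin.last p) - lam (Fin.last p)) := by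
  rw [mMono, aDot_of_castSucc_eq hη]
  simp only [hη, Nat.add_sub_cancel_left, pow_ite, pow_zero, Finset.prod_ite_eq', Finset.mem_univ,
    if_true, neg_add]
  ring_nf

end Shift

theorem ydaj_mMono_not_mem_Asub_general (p d m : ℕ)
    (a : Fin p → ℤ)
    (hnonpos : ∀ i : Fin p, (i : ℕ) < m → a i ≤ 0)
    (hpos : ∀ i : Fin p, m ≤ (i : ℕ) → 0 < a i)
    (lam : Fin (p+1) → ℕ)
    (hlamzero : ∀ i : Fin p, m ≤ (i : ℕ) → lam i.castSucc = 0)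
    (hlamn : lam (Fin.last p) < d)
    (j : Fin p) (hj : m ≤ (j : ℕ)) (k : Fin p)
    (η : Fin (p+1) → ℕ)
    (hη : η = fun i => if i = k.castSucc then lam i + lam (Fin.last p)
                       else if i = Fin.last p then 0 else lam i) :
    yv ^ ((d : ℤ) * a j) * mMono a lam η =
        (xv k * yv ^ (-(a k) : ℤ)) ^ lam (Fin.last p) *
          yv ^ (-(aDot a lam) - (lam (Fin.last p) : ℤ) + (d : ℤ) * a j) ∧
      yv ^ ((d : ℤ) * a j) * mMono a lam η ∉ Asub a := by
  set L := lam (Fin.last p)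
  have hηc : ∀ i : Fin p, η i.castSucc = lam i.castSucc + if i = k then L else 0 := by
    intro i
    by_cases hi : i = k <;> simp [hη, hi]
  have hηlast : η (Fin.last p) = 0 := by simp [hη, (Fin.castSucc_lt_last k).ne']
  have hz : yv ^ ((d : ℤ) * a j) * mMono a lam η =
      xv k ^ L * yv ^ ((d : ℤ) * a j - aDot a lam - a k * L - L) := by
    rw [mMono_of_castSucc_eq hηc, hηlast, mul_left_comm, ← zpow_add₀ yv_ne_zero]
    congr 2
    push_cast
    ring
  refine ⟨hz.trans ?_, fun hmem => ?_⟩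
  · rw [mul_pow, ← zpow_natCast (yv ^ _), ← zpow_mul, mul_assoc, ← zpow_add₀ yv_ne_zero]
    congr 2
    ring
  · have hx : xv k ^ L = algebraMap _ (Kk p) (monomial (single k.castSucc L) (1 : ℂ)) := by
      rw [← X_pow_eq_monomial, map_pow]; rfl
    rw [hz, hx] at hmem
    have hw := (algebraMap_monomial_mul_zpow_mem_iff _ _).1 (Asub_le_nonposWeightSubalgebra a hmem)
    simp only [weight_single, Fin.snoc_castSucc, Fin.snoc_last, nsmul_eq_mul, mul_one] at hw
    have hdot : aDot a lam ≤ 0 :=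
      aDot_nonpos fun i hi => hnonpos i (not_le.1 fun h => hi (hlamzero i h))
    have hdaj : (d : ℤ) ≤ d * a j := le_mul_of_one_le_right (by positivity) (hpos j hj)
    have hL : (L : ℤ) < d := by exact_mod_cast hlamn
    linarith

/-- Under the ordering assumption `a_1 ≤ ⋯ ≤ a_m ≤ 0 < a_{m+1} ≤ ⋯ ≤ a_{n-1}` with
`0 ≤ m < n-1`, for a composition `λ` of `d` with `λ_i = 0` for `m+1 ≤ i ≤ n-1` and `λ_n < d`,
an index `j` with `m+1 ≤ j ≤ n-1`, `k ∈ {1,…,n-1}` and `η = λ + λ_n e_k - λ_n e_n`, the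
element `y^{d a_j} m_{λ,η} = (x_k y^{-a_k})^{λ_n} y^{-a·λ° - λ_n + d a_j}` does not lie
in `A`. (Here the paper's `n` is `p+1`, and indices `1,…,n-1` correspond to `Fin p`.) -/
theorem ydaj_mMono_not_mem_Asub (p d m : ℕ) (hp : 1 ≤ p) (hd : 1 ≤ d) (hm : m < p)
    (a : Fin p → ℤ) (hsort : Monotone a)
    (hnonpos : ∀ i : Fin p, (i : ℕ) < m → a i ≤ 0)
    (hpos : ∀ i : Fin p, m ≤ (i : ℕ) → 0 < a i)
    (lam : Fin (p+1) → ℕ) (hlam : ∑ i, lam i = d)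
    (hlamzero : ∀ i : Fin p, m ≤ (i : ℕ) → lam i.castSucc = 0)
    (hlamn : lam (Fin.last p) < d)
    (j : Fin p) (hj : m ≤ (j : ℕ)) (k : Fin p)
    (η : Fin (p+1) → ℕ)
    (hη : η = fun i => if i = k.castSucc then lam i + lam (Fin.last p)
                       else if i = Fin.last p then 0 else lam i) :
    yv ^ ((d : ℤ) * a j) * mMono a lam η =
        (xv k * yv ^ (-(a k) : ℤ)) ^ lam (Fin.last p) *
          yv ^ (-(aDot a lam) - (lam (Fin.last p) : ℤ) + (d : ℤ) * a j) ∧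
      yv ^ ((d : ℤ) * a j) * mMono a lam η ∉ Asub a :=
  ydaj_mMono_not_mem_Asub_general p d m a hnonpos hpos lam hlamzero hlamn j hj k η hη

end
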